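/- Let n ∈ ℕ. If X = Y_0 ∪ Y_1 ⊆ ℕ is a finite set which is ω^n·2-large and exp-sparse, then Y_0 is ω^n-large or Y_1 is ω^n-large. -/

import Mathlib

/- Ordinals `α < ω^ω` are represented in Cantor normal form as the list of their
exponents in nonincreasing order: `[n₀, n₁, …, n_{k-1}]` codes `ω^{n₀} + ⋯ + ω^{n_{k-1}}`,
and such a list is a valid Cantor normal form when it is sorted w.r.t. `≥`. -/

/-- The Ketonen–Solovay operation `α[m]`: `0[m] = 0`; `α[m] = β` if `α = β + 1`;
`α[m] = β + ω^(n-1)·m` if `α = β + ω^n` with `n ≥ 1`. -/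
def KSstep : List ℕ → ℕ → List ℕ
  | [], _ => []
  | [0], _ => []
  | [Nat.succ n], m => List.replicate m n
  | a :: b :: l, m => a :: KSstep (b :: l) m

/-- A finite set `X = {x₀ < ⋯ < x_{ℓ-1}} ⊆ ℕ` is `α`-large if `α[x₀][x₁]⋯[x_{ℓ-1}| = 0`. -/
def IsLarge (α : List ℕ) (X : Finset ℕ) : Prop :=
  (X.sort (· ≤ ·)).foldl KSstep α = []

/-- A finite set `X ⊆ ℕ` (with `min X ≥ 3`) is exp-sparse if for all `x, y ∈ X`,
`x < y` implies `4^x < y`. -/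
def ExpSparse (X : Finset ℕ) : Prop :=
  (∀ x ∈ X, 3 ≤ x) ∧ ∀ x ∈ X, ∀ y ∈ X, x < y → 4 ^ x < y

/-- A finite set `X ⊆ ℕ` is `α`-sparse if for all `x, y ∈ X` with `x < y`,
the interval `(x, y]` is `α`-large. -/
def SparseFor (α : List ℕ) (X : Finset ℕ) : Prop :=
  ∀ x ∈ X, ∀ y ∈ X, x < y → IsLarge α (Finset.Ioc x y)

/-! Colour the elements of `X` by `Y₀` and `Y₁` and generalise to `ω^n·(a+b)`-large sets,
which are to contain an `ω^n·a`-large set of colour 0 or an `ω^n·b`-large set of colour 1;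
`n = 0` is the pigeonhole principle. An `ω^(n+1)·m`-large set consists of `m` consecutive
blocks `t :: u`, each with `u` being `ω^n·t`-large. Once each colour `i` owns an element `wᵢ`
before a block `t :: u`, sparseness gives `t ≥ w₀ + w₁ + 2`, so by induction on `n`,
applied to `ω^n·t = ω^n·(w₀+1) + ω^n·(t-w₀-1)`, some colour `i` finds inside `u` an
`ω^n·wᵢ`-large set followed by a further element `z`. Then `wᵢ` followed by that set is
`ω^(n+1)`-large, and `z` takes over the role of `wᵢ` for the remaining blocks. Largeness is
monotone under supersets, so unused elements may be discarded throughout. -/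

open List

theorem cons_filter_sublist_filter_append {q : ℕ → Bool} {y : ℕ} {s₁ s₂ : List ℕ}
    (hy : y ∈ s₁.filter q) : y :: s₂.filter q <+ (s₁ ++ s₂).filter q := by
  rw [filter_append]
  exact (singleton_sublist.2 hy).append (Sublist.refl _)

def IsLargeList (α l : List ℕ) : Prop := l.foldl KSstep α = []

theorem KSstep_cons (a : ℕ) {l : List ℕ} (hl : l ≠ []) (m : ℕ) :
    KSstep (a :: l) m = a :: KSstep l m := by
  obtain ⟨b, l, rfl⟩ := exists_cons_of_ne_nil hl
  rw [KSstep]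

theorem KSstep_append (γ : List ℕ) {δ : List ℕ} (hδ : δ ≠ []) (m : ℕ) :
    KSstep (γ ++ δ) m = γ ++ KSstep δ m := by
  induction γ with
  | nil => rfl
  | cons a γ ih => rw [cons_append, KSstep_cons a (by simp [hδ]), ih, cons_append]

theorem KSstep_append_singleton_zero (γ : List ℕ) (m : ℕ) : KSstep (γ ++ [0]) m = γ := by
  rw [KSstep_append γ (cons_ne_nil _ _)]
  exact append_nil γ

theorem KSstep_append_replicate_succ_zero (γ : List ℕ) (c k : ℕ) :
    KSstep (γ ++ replicate (c + 1) k) 0 = γ ++ replicate c k := by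
  rw [replicate_succ', ← append_assoc, KSstep_append _ (cons_ne_nil _ _)]
  cases k <;> exact append_nil _

/-- `α[x]` arises from `α[y]`, for `x ≤ y`, by repeatedly applying `·[0]`. -/
theorem KSstep_of_le_of_closed {P : List ℕ → Prop} (hP : ∀ β, P β → P (KSstep β 0))
    (α : List ℕ) {x y : ℕ} (hxy : x ≤ y) (h : P (KSstep α y)) : P (KSstep α x) := by
  rcases eq_nil_or_concat' α with rfl | ⟨γ, _ | k, rfl⟩
  · exact h
  · rwa [KSstep_append_singleton_zero] at h ⊢
  · rw [KSstep_append γ (cons_ne_nil _ _)] at h ⊢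
    change P (γ ++ replicate y k) at h
    change P (γ ++ replicate x k)
    induction hxy with
    | refl => exact h
    | step _ ih => exact ih (KSstep_append_replicate_succ_zero γ _ k ▸ hP _ h)

namespace IsLargeList

theorem nil_left (l : List ℕ) : IsLargeList [] l := by
  induction l with
  | nil => rfl
  | cons x l ih => exact ih

theorem nil_right_iff {α : List ℕ} : IsLargeList α [] ↔ α = [] := Iff.rfl

theorem cons_iff {α l : List ℕ} {x : ℕ} :
    IsLargeList α (x :: l) ↔ IsLargeList (KSstep α x) l :=
  Iff.rfl

theorem step {l : List ℕ} (hl : l.Pairwise (· ≤ ·)) {α : List ℕ} {x : ℕ}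
    (hx : ∀ z ∈ l, x ≤ z) (h : IsLargeList α l) : IsLargeList (KSstep α x) l := by
  induction l generalizing α x with
  | nil =>
    rw [nil_right_iff] at h
    subst h
    rfl
  | cons y l ih =>
    rw [pairwise_cons] at hl
    exact ih hl.2 hl.1
      (KSstep_of_le_of_closed (P := (IsLargeList · l)) (fun _ => ih hl.2 fun _ _ => Nat.zero_le _)
        α (hx y mem_cons_self) h)

theorem mono {l₁ l₂ : List ℕ} (hsub : l₁ <+ l₂) (hl₂ : l₂.Pairwise (· ≤ ·))
    {α : List ℕ} (h : IsLargeList α l₁) : IsLargeList α l₂ := by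
  induction hsub generalizing α with
  | slnil => exact h
  | cons a _ ih =>
    rw [pairwise_cons] at hl₂
    exact (ih hl₂.2 h).step hl₂.2 hl₂.1
  | cons_cons a _ ih => exact ih (pairwise_cons.1 hl₂).2 h

theorem exists_append {γ δ l : List ℕ} (h : IsLargeList (γ ++ δ) l) :
    ∃ l₁ l₂, l = l₁ ++ l₂ ∧ IsLargeList δ l₁ ∧ IsLargeList γ l₂ := by
  induction l generalizing δ with
  | nil => exact ⟨[], [], rfl, (append_eq_nil_iff.1 h).2, (append_eq_nil_iff.1 h).1⟩
  | cons x l ih =>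
    by_cases hδ : δ = []
    · subst hδ
      exact ⟨[], x :: l, rfl, rfl, by simpa using h⟩
    · rw [cons_iff, KSstep_append γ hδ] at h
      obtain ⟨l₁, l₂, rfl, h₁, h₂⟩ := ih h
      exact ⟨x :: l₁, l₂, rfl, h₁, h₂⟩

theorem append {γ δ l₁ l₂ : List ℕ} (hl : (l₁ ++ l₂).Pairwise (· ≤ ·))
    (h₁ : IsLargeList δ l₁) (h₂ : IsLargeList γ l₂) :
    IsLargeList (γ ++ δ) (l₁ ++ l₂) := by
  induction l₁ generalizing δ with
  | nil =>
    rw [nil_right_iff] at h₁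
    subst h₁
    simpa using h₂
  | cons x l₁ ih =>
    by_cases hδ : δ = []
    · subst hδ
      rw [append_nil]
      exact h₂.mono (sublist_append_right _ _) hl
    · rw [cons_append, cons_iff, KSstep_append γ hδ]
      exact ih (pairwise_cons.1 hl).2 (cons_iff.1 h₁)

theorem exists_block {m n : ℕ} {s : List ℕ} (h : IsLargeList (replicate (m + 1) (n + 1)) s) :
    ∃ t u s₂, s = t :: u ++ s₂ ∧ IsLargeList (replicate t n) u ∧
      IsLargeList (replicate m (n + 1)) s₂ := by
  rw [replicate_succ'] at h
  obtain ⟨_ | ⟨t, u⟩, s₂, rfl, h₁, h₂⟩ := h.exists_append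
  · exact absurd h₁ (cons_ne_nil _ _)
  · exact ⟨t, u, s₂, rfl, h₁, h₂⟩

theorem exists_sublist_concat {c w n : ℕ} {l : List ℕ} (hwc : w < c)
    (h : IsLargeList (replicate c n) l) :
    ∃ v z, v ++ [z] <+ l ∧ IsLargeList (replicate w n) v := by
  rw [show c = (c - w) + w by omega, replicate_add] at h
  obtain ⟨v, _ | ⟨z, l₂⟩, rfl, hv, hl₂⟩ := h.exists_append
  · rw [nil_right_iff, replicate_eq_nil_iff] at hl₂
    omega
  · exact ⟨v, z, (singleton_sublist.2 mem_cons_self).append_left v, hv⟩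

theorem replicate_zero_iff {c : ℕ} {l : List ℕ} :
    IsLargeList (replicate c 0) l ↔ c ≤ l.length := by
  induction l generalizing c with
  | nil => simp [nil_right_iff]
  | cons x l ih =>
    rw [cons_iff]
    cases c with
    | zero => exact iff_of_true (nil_left l) (Nat.zero_le _)
    | succ c => rw [replicate_succ', KSstep_append_singleton_zero, ih, length_cons]; omega

end IsLargeList

theorem IsLarge.of_isLargeList {α l : List ℕ} {X : Finset ℕ} (hl : l.Pairwise (· < ·))
    (hlX : ∀ x ∈ l, x ∈ X) (h : IsLargeList α l) : IsLarge α X :=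
  h.mono (sublist_of_subperm_of_pairwise
      (hl.nodup.subperm fun x hx => (Finset.mem_sort _).2 (hlX x hx)) (hl.imp le_of_lt)
      (X.pairwise_sort _))
    (X.pairwise_sort _)

def PartitionProperty (n : ℕ) : Prop :=
  ∀ (a b : ℕ) (s : List ℕ) (p : ℕ → Bool), s.Pairwise (2 * · + 2 ≤ ·) →
    IsLargeList (replicate (a + b) n) s →
    IsLargeList (replicate a n) (s.filter p) ∨ IsLargeList (replicate b n) (s.filter (!p ·))

theorem partitionProperty_zero : PartitionProperty 0 := by
  intro a b s p _ h
  simp only [IsLargeList.replicate_zero_iff] at h ⊢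
  have := s.length_eq_length_filter_add p
  omega

theorem isLargeList_cons_filter_append {n a b w₀ w₁ z : ℕ} {p : ℕ → Bool}
    {s₁ s₂ v : List ℕ} (hs₀ : (w₀ :: (s₁ ++ s₂)).Pairwise (· ≤ ·))
    (hs₁ : (w₁ :: (s₁ ++ s₂)).Pairwise (· ≤ ·))
    (hv : v ++ [z] <+ s₁.filter p) (hvl : IsLargeList (replicate w₀ n) v)
    (hrec : IsLargeList (replicate a (n + 1)) (z :: s₂.filter p) ∨
      IsLargeList (replicate b (n + 1)) (w₁ :: s₂.filter (!p ·))) :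
    IsLargeList (replicate (a + 1) (n + 1)) (w₀ :: (s₁ ++ s₂).filter p) ∨
      IsLargeList (replicate b (n + 1)) (w₁ :: (s₁ ++ s₂).filter (!p ·)) := by
  have hsort : ∀ {w} (q : ℕ → Bool), (w :: (s₁ ++ s₂)).Pairwise (· ≤ ·) →
      (w :: (s₁ ++ s₂).filter q).Pairwise (· ≤ ·) :=
    fun _ h => h.sublist (filter_sublist.cons_cons _)
  refine hrec.imp (fun h => ?_) (fun h => ?_)
  · have hsub : w₀ :: (v ++ z :: s₂.filter p) <+ w₀ :: (s₁ ++ s₂).filter p := by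
      rw [filter_append]
      simpa using (hv.append (Sublist.refl (s₂.filter p))).cons_cons w₀
    refine IsLargeList.mono hsub (hsort p hs₀) ?_
    rw [IsLargeList.cons_iff, replicate_succ', KSstep_append _ (cons_ne_nil _ _)]
    exact IsLargeList.append ((hsort p hs₀).sublist hsub).of_cons hvl h
  · exact h.mono (((sublist_append_right s₁ s₂).filter _).cons_cons w₁) (hsort _ hs₁)

theorem PartitionProperty.cons_filter {n : ℕ} (hn : PartitionProperty n) (m : ℕ)
    {a b w₀ w₁ : ℕ} {s : List ℕ} (p : ℕ → Bool)
    (hs₀ : (w₀ :: s).Pairwise (2 * · + 2 ≤ ·)) (hs₁ : (w₁ :: s).Pairwise (2 * · + 2 ≤ ·))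
    (hs : IsLargeList (replicate m (n + 1)) s) (hab : a + b ≤ m + 1) :
    IsLargeList (replicate a (n + 1)) (w₀ :: s.filter p) ∨
      IsLargeList (replicate b (n + 1)) (w₁ :: s.filter (!p ·)) := by
  induction m generalizing a b w₀ w₁ s p with
  | zero =>
    obtain rfl | rfl : a = 0 ∨ b = 0 := by omega
    exacts [.inl (IsLargeList.nil_left _), .inr (IsLargeList.nil_left _)]
  | succ m ih =>
    obtain _ | a := a
    · exact .inl (IsLargeList.nil_left _)
    obtain _ | b := b
    · exact .inr (IsLargeList.nil_left _)
    obtain ⟨t, u, s₂, rfl, hu, hs₂⟩ := hs.exists_block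
    have ht : w₀ + w₁ + 2 ≤ t := by
      have := (pairwise_cons.1 hs₀).1 t mem_cons_self
      have := (pairwise_cons.1 hs₁).1 t mem_cons_self
      omega
    have hsort : ∀ {w}, (w :: (t :: u ++ s₂)).Pairwise (2 * · + 2 ≤ ·) →
        (w :: (t :: u ++ s₂)).Pairwise (· ≤ ·) := fun h => h.imp (by omega)
    have heads : ∀ {w}, (w :: (t :: u ++ s₂)).Pairwise (2 * · + 2 ≤ ·) →
        ∀ y ∈ w :: t :: u, (y :: s₂).Pairwise (2 * · + 2 ≤ ·) :=
      fun h _ hy => h.sublist ((singleton_sublist.2 hy).append (Sublist.refl s₂))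
    have hu_sparse : u.Pairwise (2 * · + 2 ≤ ·) :=
      hs₀.sublist (((sublist_append_left u s₂).cons t).cons w₀)
    rcases hn (w₀ + 1) (t - (w₀ + 1)) u p hu_sparse (by rwa [Nat.add_sub_cancel' (by omega)])
      with h | h
    · obtain ⟨v, z, hv, hvl⟩ := h.exists_sublist_concat (Nat.lt_succ_self w₀)
      have hz : z ∈ u := mem_of_mem_filter (hv.subset (by simp))
      exact isLargeList_cons_filter_append (hsort hs₀) (hsort hs₁)
        (hv.trans ((sublist_cons_self t u).filter p)) hvl
        (ih (a := a) (b := b + 1) p (heads hs₀ z (by simp [hz]))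
          (heads hs₁ w₁ mem_cons_self) hs₂ (by omega))
    · obtain ⟨v, z, hv, hvl⟩ := h.exists_sublist_concat (w := w₁) (by omega)
      have hz : z ∈ u := mem_of_mem_filter (hv.subset (by simp))
      have hrec := ih (a := a + 1) (b := b) p (heads hs₀ w₀ mem_cons_self)
        (heads hs₁ z (by simp [hz])) hs₂ (by omega)
      have := isLargeList_cons_filter_append (p := (!p ·)) (hsort hs₁) (hsort hs₀)
        (hv.trans ((sublist_cons_self t u).filter _)) hvl (by simpa using hrec.symm)
      simpa using this.symm

theorem PartitionProperty.succ {n : ℕ} (hn : PartitionProperty n) :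
    PartitionProperty (n + 1) := by
  intro a b s p hs h
  obtain ⟨k, hk⟩ : ∃ k, a + b = k := ⟨_, rfl⟩
  induction k generalizing a b s p with
  | zero =>
    obtain rfl : a = 0 := by omega
    exact .inl (IsLargeList.nil_left _)
  | succ k ih =>
    obtain _ | a := a
    · exact .inl (IsLargeList.nil_left _)
    obtain _ | b := b
    · exact .inr (IsLargeList.nil_left _)
    rw [show a + 1 + (b + 1) = a + b + 1 + 1 by omega] at h
    obtain ⟨t, u, s₂, rfl, hu, hs₂⟩ := h.exists_block
    clear h
    wlog hpt : p t generalizing a b p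
    · have := this (!p ·) b a (by omega) (by rwa [Nat.add_comm b]) (by simpa using hpt)
      simpa [or_comm] using this
    have hsort : (t :: u ++ s₂).Pairwise (· ≤ ·) := hs.imp (by omega)
    have hs₂_sparse : s₂.Pairwise (2 * · + 2 ≤ ·) := hs.sublist (sublist_append_right _ _)
    by_cases hu' : u.filter (!p ·) = []
    · have hblock : (t :: u).filter p = t :: u := by
        refine filter_eq_self.2 fun x hx => ?_
        rcases mem_cons.1 hx with rfl | hx
        · exact hpt
        · simpa using filter_eq_nil_iff.1 hu' x hx
      refine (ih a (b + 1) s₂ p hs₂_sparse (by omega) (by omega)).imp (fun h => ?_)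
        (fun h => ?_)
      · rw [filter_append, hblock, replicate_succ']
        exact IsLargeList.append (hsort.sublist ((filter_sublist).append_left _)) hu h
      · exact h.mono ((sublist_append_right _ _).filter _) (hsort.sublist filter_sublist)
    · obtain ⟨z, hz⟩ := exists_mem_of_ne_nil _ hu'
      have heads : ∀ y ∈ t :: u, (y :: s₂).Pairwise (2 * · + 2 ≤ ·) :=
        fun y hy => hs.sublist ((singleton_sublist.2 hy).append (Sublist.refl s₂))
      refine (hn.cons_filter (a + b + 1) (a := a + 1) (b := b + 1) p (heads t mem_cons_self)
        (heads z (mem_cons_of_mem _ (mem_of_mem_filter hz))) hs₂ (by omega)).imp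
        (fun h => h.mono ?_ (hsort.sublist filter_sublist))
        (fun h => h.mono ?_ (hsort.sublist filter_sublist))
      · exact cons_filter_sublist_filter_append (mem_filter.2 ⟨mem_cons_self, hpt⟩)
      · exact cons_filter_sublist_filter_append (((sublist_cons_self t u).filter _).subset hz)

theorem partitionProperty (n : ℕ) : PartitionProperty n :=
  Nat.rec partitionProperty_zero (fun _ => PartitionProperty.succ) n

theorem two_mul_add_one_le_four_pow (x : ℕ) : 2 * x + 1 ≤ 4 ^ x :=
  calc 2 * x + 1 ≤ (x + 1) * (x + 1) := by nlinarith
    _ ≤ 2 ^ x * 2 ^ x := Nat.mul_le_mul Nat.lt_two_pow_self Nat.lt_two_pow_self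
    _ = 4 ^ x := by rw [← mul_pow]; norm_num

/-- Let `n ∈ ℕ`. If `X = Y₀ ∪ Y₁ ⊆ ℕ` is a finite set which is `ω^n·2`-large and
exp-sparse, then `Y₀` is `ω^n`-large or `Y₁` is `ω^n`-large. -/
theorem isLarge_of_union_two (n : ℕ) (Y₀ Y₁ : Finset ℕ)
    (hX : IsLarge [n, n] (Y₀ ∪ Y₁)) (hs : ExpSparse (Y₀ ∪ Y₁)) :
    IsLarge [n] Y₀ ∨ IsLarge [n] Y₁ := by
  set s := (Y₀ ∪ Y₁).sort (· ≤ ·)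
  have hlt : s.Pairwise (· < ·) := (Finset.sortedLT_sort _).pairwise
  have hsparse : s.Pairwise (2 * · + 2 ≤ ·) := hlt.imp_of_mem fun {x _} hx hy hxy => by
    have := hs.2 _ ((Finset.mem_sort _).1 hx) _ ((Finset.mem_sort _).1 hy) hxy
    have := two_mul_add_one_le_four_pow x
    omega
  refine (partitionProperty n 1 1 s (fun x => x ∈ Y₀) hsparse hX).imp
    (IsLarge.of_isLargeList (hlt.sublist filter_sublist) fun x hx => ?_)
    (IsLarge.of_isLargeList (hlt.sublist filter_sublist) fun x hx => ?_)
  · simpa using of_mem_filter hx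
  · have := (Finset.mem_sort _).1 (mem_of_mem_filter hx)
    simp_all
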